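/- arXiv:2408.11101 — 2 statements merged into one kernel-verified Lean document; each statement's English description precedes it below -/
import Mathlib

section
/- Let k > k₀ ≥ 1 be integers and let F be a family of k-element subsets of {1,...,n} such that any two distinct members E, F ∈ F satisfy |E ∩ F| < k - k₀. Then |F| ≤ C(n, k-k₀). -/
/-- Generalized Ray-Chaudhuri–Wilson bound: if `F` is a family of `k`-element subsets of
`{1,…,n}` such that any two distinct members intersect in fewer than `k - k₀` points
(`k > k₀ ≥ 1`), then `|F| ≤ C(n, k-k₀)`. -/
theorem stmt9 (n k k₀ : ℕ) (hk₀ : 1 ≤ k₀) (hk : k₀ < k)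
    (F : Finset (Finset (Fin n))) (hF : ∀ A ∈ F, A.card = k)
    (hint : ∀ A ∈ F, ∀ B ∈ F, A ≠ B → (A ∩ B).card < k - k₀) :
    F.card ≤ Nat.choose n (k - k₀) := by
  classical
  set m := k - k₀ with hm
  have hmk : m ≤ k := Nat.sub_le _ _
  have hex : ∀ A ∈ F, ∃ t ⊆ A, t.card = m := by
    intro A hA
    exact Finset.exists_subset_card_eq (s := A) (n := m) (by rw [hF A hA]; exact hmk)
  choose! f hf hfcard using hex
  have hmap : ∀ A ∈ F, f A ∈ Finset.powersetCard m (Finset.univ : Finset (Fin n)) := by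
    intro A hA
    simp [Finset.mem_powersetCard, hfcard A hA, Finset.subset_univ]
  have hinj : ∀ A ∈ F, ∀ B ∈ F, f A = f B → A = B := by
    intro A hA B hB hfab
    by_contra hne
    have h1 : f A ⊆ A ∩ B := by
      intro x hx
      exact Finset.mem_inter.2 ⟨hf A hA hx, hf B hB (hfab ▸ hx)⟩
    have h2 : m ≤ (A ∩ B).card := (hfcard A hA) ▸ Finset.card_le_card h1
    exact absurd (hint A hA B hB hne) (not_lt.2 h2)
  calc F.card ≤ (Finset.powersetCard m (Finset.univ : Finset (Fin n))).card :=
        Finset.card_le_card_of_injOn f hmap hinj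
    _ = Nat.choose n m := by
        rw [Finset.card_powersetCard, Finset.card_univ, Fintype.card_fin]
end

section
/- Let G be a graph with at most V vertices and at least E edges whose connected components each have at most e ≥ 1 edges. Then V·√(e/2) + √(e/2) + 1 ≥ E. In particular, if a family of graphs G^{(n)} has Θ(n) vertices and Θ(n²) edges, then G^{(n)} has a connected component with Θ(n) vertices and Θ(n²) edges. -/
namespace Stmt18Aux

variable {Vt : Type} [Fintype Vt]

lemma mem_edge_comp (G : SimpleGraph Vt) {a b : Vt} (hab : G.Adj a b) {x : Vt}
    (hx : x ∈ s(a, b)) :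
    G.connectedComponentMk x = G.connectedComponentMk a := by
  rcases Sym2.mem_iff.mp hx with rfl | rfl
  · rfl
  · exact (SimpleGraph.ConnectedComponent.connectedComponentMk_eq_of_adj hab).symm

lemma comp_edges_sq (G : SimpleGraph Vt) (K : G.ConnectedComponent) :
    2 * ({ed ∈ G.edgeSet | ∀ x ∈ ed, G.connectedComponentMk x = K}).ncard
      ≤ K.supp.ncard ^ 2 := by
  classical
  have hset : {ed ∈ G.edgeSet | ∀ x ∈ ed, G.connectedComponentMk x = K}
      = Sym2.map (Subtype.val : K.supp → Vt) '' (G.induce K.supp).edgeSet := by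
    ext ed
    induction ed using Sym2.ind with
    | _ a b =>
      simp only [Set.mem_setOf_eq, Set.mem_image]
      constructor
      · rintro ⟨hed, hall⟩
        have hab : G.Adj a b := (SimpleGraph.mem_edgeSet _).mp hed
        have ha : a ∈ K.supp := hall a (Sym2.mem_mk_left a b)
        have hb : b ∈ K.supp := hall b (Sym2.mem_mk_right a b)
        refine ⟨s(⟨a, ha⟩, ⟨b, hb⟩), ?_, ?_⟩
        · exact (SimpleGraph.mem_edgeSet _).mpr (by simpa [SimpleGraph.comap_adj] using hab)
        · simp [Sym2.map_pair_eq]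
      · rintro ⟨ed', hed', hmap⟩
        obtain ⟨⟨x, y⟩, rfl⟩ := ed'.exists_rep
        have hxy : G.Adj (x : Vt) (y : Vt) := by
          have := (SimpleGraph.mem_edgeSet _).mp hed'
          simpa [SimpleGraph.comap_adj] using this
        have hmap' : s((x : Vt), (y : Vt)) = s(a, b) := by
          simpa [Sym2.map_pair_eq] using hmap
        rw [← hmap']
        refine ⟨(SimpleGraph.mem_edgeSet _).mpr hxy, ?_⟩
        intro z hz
        have hxK : G.connectedComponentMk (x : Vt) = K :=
          (SimpleGraph.ConnectedComponent.mem_supp_iff K x).mp x.2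
        rw [mem_edge_comp G hxy hz, hxK]
  rw [hset, Set.ncard_image_of_injective _ (Sym2.map.injective Subtype.val_injective)]
  haveI : Fintype ↥K.supp := Set.Finite.fintype (Set.toFinite _)
  have h1 : (G.induce K.supp).edgeSet.ncard = (G.induce K.supp).edgeFinset.card := by
    rw [SimpleGraph.edgeFinset, Set.ncard_eq_toFinset_card']
  have h2 := SimpleGraph.card_edgeFinset_le_card_choose_two (G := G.induce K.supp)
  have h3 : Fintype.card ↥K.supp = K.supp.ncard := by
    rw [Set.ncard_eq_toFinset_card', Set.toFinset_card]
  set v := K.supp.ncard with hv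
  have h4 : v.choose 2 = v * (v - 1) / 2 := Nat.choose_two_right v
  have h5 : v * (v - 1) ≤ v ^ 2 := by
    have : v - 1 ≤ v := Nat.sub_le v 1
    calc v * (v - 1) ≤ v * v := Nat.mul_le_mul_left v this
      _ = v ^ 2 := (sq v).symm
  rw [h1]
  rw [h3] at h2
  omega

lemma supp_sum (G : SimpleGraph Vt) [Fintype G.ConnectedComponent] :
    ∑ K : G.ConnectedComponent, K.supp.ncard = Fintype.card Vt := by
  classical
  rw [Fintype.card, Finset.card_eq_sum_card_fiberwise
    (f := G.connectedComponentMk) (t := Finset.univ) (fun x _ => Finset.mem_univ _)]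
  refine Finset.sum_congr rfl fun K _ => ?_
  rw [Set.ncard_eq_toFinset_card']
  congr 1
  ext x
  simp [SimpleGraph.ConnectedComponent.mem_supp_iff]

lemma edge_sum (G : SimpleGraph Vt) [Fintype G.ConnectedComponent] :
    G.edgeSet.ncard = ∑ K : G.ConnectedComponent,
      ({ed ∈ G.edgeSet | ∀ x ∈ ed, G.connectedComponentMk x = K}).ncard := by
  classical
  rw [Set.ncard_eq_toFinset_card']
  rw [Finset.card_eq_sum_card_fiberwise
    (f := fun ed => G.connectedComponentMk (Quot.out ed).1) (t := Finset.univ)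
    (fun x _ => Finset.mem_univ _)]
  refine Finset.sum_congr rfl fun K _ => ?_
  rw [Set.ncard_eq_toFinset_card']
  congr 1
  ext ed
  simp only [Finset.mem_filter, Set.mem_toFinset, Set.mem_setOf_eq]
  constructor
  · rintro ⟨hed, hK⟩
    refine ⟨hed, ?_⟩
    intro z hz
    have hout : ed = s((Quot.out ed).1, (Quot.out ed).2) := by
      exact (Quot.out_eq ed).symm
    have hadj : G.Adj (Quot.out ed).1 (Quot.out ed).2 := by
      rw [← SimpleGraph.mem_edgeSet, ← hout]; exact hed
    rw [hout] at hz
    rw [mem_edge_comp G hadj hz, hK]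
  · rintro ⟨hed, hall⟩
    exact ⟨hed, hall _ (Sym2.out_fst_mem ed)⟩

lemma part1 (V E e : ℕ) (Vt : Type) [Fintype Vt] (G : SimpleGraph Vt)
    (he : 1 ≤ e) (hV : Fintype.card Vt ≤ V) (hE : E ≤ G.edgeSet.ncard)
    (hcomp : ∀ K : G.ConnectedComponent,
      ({ed ∈ G.edgeSet | ∀ x ∈ ed, G.connectedComponentMk x = K}).ncard ≤ e) :
    (E : ℝ) ≤ (V : ℝ) * Real.sqrt ((e : ℝ) / 2) + Real.sqrt ((e : ℝ) / 2) + 1 := by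
  classical
  haveI : Fintype G.ConnectedComponent := Fintype.ofFinite _
  set s := Real.sqrt ((e : ℝ) / 2) with hs
  have hs0 : 0 ≤ s := Real.sqrt_nonneg _
  have hs2 : s ^ 2 = (e : ℝ) / 2 := Real.sq_sqrt (by positivity)
  have key : ∀ K : G.ConnectedComponent,
      (({ed ∈ G.edgeSet | ∀ x ∈ ed, G.connectedComponentMk x = K}).ncard : ℝ)
        ≤ (K.supp.ncard : ℝ) * s := by
    intro K
    have h1 := comp_edges_sq G K
    have h2 := hcomp K
    have h1' : 2 * (({ed ∈ G.edgeSet | ∀ x ∈ ed, G.connectedComponentMk x = K}).ncard : ℝ)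
        ≤ (K.supp.ncard : ℝ) ^ 2 := by exact_mod_cast h1
    have h2' : (({ed ∈ G.edgeSet | ∀ x ∈ ed, G.connectedComponentMk x = K}).ncard : ℝ)
        ≤ (e : ℝ) := by exact_mod_cast h2
    have hv0 : (0 : ℝ) ≤ (K.supp.ncard : ℝ) := Nat.cast_nonneg _
    rcases le_or_gt ((K.supp.ncard : ℝ)) (2 * s) with h | h
    · nlinarith [mul_le_mul_of_nonneg_left h hv0]
    · nlinarith [mul_le_mul_of_nonneg_right h.le hs0]
  have hsum := edge_sum G
  have hsupp := supp_sum G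
  have step1 : (E : ℝ) ≤ (G.edgeSet.ncard : ℝ) := by exact_mod_cast hE
  have step2 : (G.edgeSet.ncard : ℝ) = ∑ K : G.ConnectedComponent,
      (({ed ∈ G.edgeSet | ∀ x ∈ ed, G.connectedComponentMk x = K}).ncard : ℝ) := by
    rw [hsum]; push_cast; rfl
  have step3 : ∑ K : G.ConnectedComponent,
      (({ed ∈ G.edgeSet | ∀ x ∈ ed, G.connectedComponentMk x = K}).ncard : ℝ)
      ≤ ∑ K : G.ConnectedComponent, (K.supp.ncard : ℝ) * s :=
    Finset.sum_le_sum fun K _ => key K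
  have step4 : ∑ K : G.ConnectedComponent, (K.supp.ncard : ℝ) * s
      = (Fintype.card Vt : ℝ) * s := by
    rw [← Finset.sum_mul]
    congr 1
    rw [← hsupp]; push_cast; rfl
  have step5 : (Fintype.card Vt : ℝ) * s ≤ (V : ℝ) * s :=
    mul_le_mul_of_nonneg_right (by exact_mod_cast hV) hs0
  nlinarith [step1, step2.le, step3, step4.le, step5]

end Stmt18Aux

set_option maxHeartbeats 1000000 in
/-- (1) Quantitative step: a graph with at most `V` vertices, at least `E` edges, and
every connected component containing at most `e ≥ 1` edges satisfies
`V·√(e/2) + √(e/2) + 1 ≥ E`. (2) In particular, a family of graphs with `Θ(n)` vertices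
and `Θ(n²)` edges has connected components with `Θ(n)` vertices and `Θ(n²)` edges. -/
theorem stmt18 :
    (∀ (V E e : ℕ) (Vt : Type) [Fintype Vt] (G : SimpleGraph Vt),
      1 ≤ e → Fintype.card Vt ≤ V → E ≤ G.edgeSet.ncard →
      (∀ K : G.ConnectedComponent,
        ({ed ∈ G.edgeSet | ∀ x ∈ ed, G.connectedComponentMk x = K}).ncard ≤ e) →
      (E : ℝ) ≤ (V : ℝ) * Real.sqrt ((e : ℝ) / 2) + Real.sqrt ((e : ℝ) / 2) + 1) ∧
    (∀ (fV : ℕ → ℕ) (G : ∀ n : ℕ, SimpleGraph (Fin (fV n))) (a b : ℝ),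
      0 < a → 0 < b →
      (∀ n : ℕ, (fV n : ℝ) ≤ b * (n : ℝ)) →
      (∀ n : ℕ, a * (n : ℝ) ^ 2 ≤ (((G n).edgeSet.ncard : ℕ) : ℝ)) →
      ∃ c : ℝ, 0 < c ∧ ∀ n : ℕ, 1 ≤ n →
        ∃ K : (G n).ConnectedComponent,
          c * (n : ℝ) ^ 2 ≤
            (({ed ∈ (G n).edgeSet | ∀ x ∈ ed, (G n).connectedComponentMk x = K}).ncard : ℝ) ∧
          c * (n : ℝ) ≤ (K.supp.ncard : ℝ)) := by
  constructor
  · intro V E e Vt _ G he hV hE hcomp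
    exact Stmt18Aux.part1 V E e Vt G he hV hE hcomp
  · intro fV G a b ha hb hV hE
    classical
    have hden : (0 : ℝ) < b + 1 + Real.sqrt 2 := by positivity
    set c₁ := a / (b + 1 + Real.sqrt 2) with hc₁
    have hc₁0 : 0 < c₁ := div_pos ha hden
    refine ⟨min (2 * c₁ ^ 2) (2 * c₁), by positivity, ?_⟩
    intro n hn
    haveI : Fintype (G n).ConnectedComponent := Fintype.ofFinite _
    have hn1 : (1 : ℝ) ≤ (n : ℝ) := by exact_mod_cast hn
    have hnpos : (0 : ℝ) < (n : ℝ) := by linarith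
    have hEn := hE n
    have hEpos : 0 < (G n).edgeSet.ncard := by
      rcases Nat.eq_zero_or_pos ((G n).edgeSet.ncard) with h | h
      · exfalso
        rw [h] at hEn
        push_cast at hEn
        nlinarith [mul_pos ha (pow_pos hnpos 2)]
      · exact h
    have hne : Nonempty ((G n).ConnectedComponent) := by
      obtain ⟨ed, hed⟩ := Set.nonempty_of_encard_ne_zero
        (s := (G n).edgeSet) (by
          intro h
          rw [Set.encard_eq_zero] at h
          rw [h] at hEpos
          simp at hEpos)
      obtain ⟨⟨x, y⟩, rfl⟩ := ed.exists_rep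
      exact ⟨(G n).connectedComponentMk x⟩
    haveI := hne
    obtain ⟨K, -, hKmax⟩ := Finset.exists_max_image Finset.univ
      (fun K => ({ed ∈ (G n).edgeSet | ∀ x ∈ ed, (G n).connectedComponentMk x = K}).ncard)
      Finset.univ_nonempty
    set e := ({ed ∈ (G n).edgeSet | ∀ x ∈ ed, (G n).connectedComponentMk x = K}).ncard with hedef
    clear_value e
    have hmax : ∀ K' : (G n).ConnectedComponent,
        ({ed ∈ (G n).edgeSet | ∀ x ∈ ed, (G n).connectedComponentMk x = K'}).ncard ≤ e :=
      fun K' => hKmax K' (Finset.mem_univ K')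
    have he1 : 1 ≤ e := by
      by_contra h
      push_neg at h
      have hz : ∀ K' : (G n).ConnectedComponent,
          ({ed ∈ (G n).edgeSet | ∀ x ∈ ed, (G n).connectedComponentMk x = K'}).ncard = 0 :=
        fun K' => by have := hmax K'; omega
      have hsum := Stmt18Aux.edge_sum (G n)
      rw [Finset.sum_eq_zero (fun K' _ => hz K')] at hsum
      omega
    have h1 := Stmt18Aux.part1 (fV n) ((G n).edgeSet.ncard) e (Fin (fV n)) (G n) he1
      (by simp) le_rfl hmax
    set s := Real.sqrt ((e : ℝ) / 2) with hsdef
    have hs0 : (0 : ℝ) ≤ s := Real.sqrt_nonneg _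
    have hs2 : s ^ 2 = (e : ℝ) / 2 := Real.sq_sqrt (by positivity)
    have he1' : (1 : ℝ) ≤ (e : ℝ) := by exact_mod_cast he1
    have hs_half : Real.sqrt (1 / 2) ≤ s := Real.sqrt_le_sqrt (by linarith)
    have hone : (1 : ℝ) ≤ Real.sqrt 2 * s := by
      have hh : Real.sqrt 2 * Real.sqrt (1 / 2) = 1 := by
        rw [← Real.sqrt_mul (by norm_num)]
        norm_num
      nlinarith [Real.sqrt_nonneg 2, hs_half]
    clear_value s
    have h3 : (fV n : ℝ) * s ≤ b * (n : ℝ) * s := mul_le_mul_of_nonneg_right (hV n) hs0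
    have hchain : a * (n : ℝ) ^ 2 ≤ (b + 1 + Real.sqrt 2) * (n : ℝ) * s := by
      have hss : s ≤ (n : ℝ) * s := le_mul_of_one_le_left hs0 hn1
      have hss2 : Real.sqrt 2 * s ≤ Real.sqrt 2 * ((n : ℝ) * s) :=
        mul_le_mul_of_nonneg_left hss (Real.sqrt_nonneg 2)
      nlinarith [hEn, h1, h3, hss, hss2]
    have h4 : a * (n : ℝ) ≤ (b + 1 + Real.sqrt 2) * s := by
      nlinarith [hchain, hnpos]
    have hsn : c₁ * (n : ℝ) ≤ s := by
      rw [hc₁, div_mul_eq_mul_div, div_le_iff₀ hden]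
      nlinarith [h4]
    have hedge : 2 * (c₁ * (n : ℝ)) ^ 2 ≤ (e : ℝ) := by
      have h5 : (c₁ * (n : ℝ)) ^ 2 ≤ s ^ 2 :=
        pow_le_pow_left₀ (mul_pos hc₁0 hnpos).le hsn 2
      linarith [hs2 ▸ h5]
    refine ⟨K, ?_, ?_⟩
    · rw [← hedef]
      have : min (2 * c₁ ^ 2) (2 * c₁) ≤ 2 * c₁ ^ 2 := min_le_left _ _
      nlinarith [hedge, sq_nonneg (n : ℝ)]
    · have hsupp := Stmt18Aux.comp_edges_sq (G n) K
      rw [← hedef] at hsupp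
      have hsupp' : 2 * (e : ℝ) ≤ ((K.supp.ncard : ℕ) : ℝ) ^ 2 := by exact_mod_cast hsupp
      have hv0 : (0 : ℝ) ≤ ((K.supp.ncard : ℕ) : ℝ) := Nat.cast_nonneg _
      have hstep : 2 * c₁ * (n : ℝ) ≤ ((K.supp.ncard : ℕ) : ℝ) := by
        nlinarith [hsupp', hedge, hv0, mul_pos hc₁0 hnpos]
      have : min (2 * c₁ ^ 2) (2 * c₁) ≤ 2 * c₁ := min_le_right _ _
      nlinarith [hstep, hnpos]
end
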